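/- arXiv:1810.06002 — 3 statements merged into one kernel-verified Lean document; each statement's English description precedes it below -/
import Mathlib

section
/- Let b : 𝔽_q[T]-monic → {0,1} be the multiplicative function with b(P^k) = 1 if k is even or χ₂(P) ∈ {0,1}, and b(P^k) = 0 otherwise, where χ₂ is the nontrivial quadratic character modulo T (q odd). If b(f) = 0 for a monic polynomial f coprime to T, then b of the reversed polynomial T^{deg f}·f(1/T), normalized to be monic by dividing by f(0), is also 0. -/
/-- `b(f) = 0` for the multiplicative function `b` of Bary-Soroker–Smilansky–Wolf if and only
if some monic irreducible `P` with `P(0)` a nonsquare in `𝔽_q^×` exactly divides `f` to an odd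
power; this predicate records such a witness. -/
def badWitness {Fq : Type*} [Field Fq] (f : Polynomial Fq) : Prop :=
  ∃ (k : ℕ) (P : Polynomial Fq), P.Monic ∧ Irreducible P ∧
    (¬ ∃ a : Fq, a ^ 2 = P.coeff 0) ∧ P ^ (2 * k + 1) ∣ f ∧ ¬ P ^ (2 * k + 2) ∣ f

open Polynomial

lemma reverse_reverse_of_coeff_zero_ne_zero {R : Type*} [Semiring R] (p : R[X])
    (h : p.coeff 0 ≠ 0) : p.reverse.reverse = p := by
  have htd : p.reverse.natDegree = p.natDegree := by
    rw [reverse_natDegree, natTrailingDegree_eq_zero.2 (Or.inr h), tsub_zero]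
  ext n
  rw [coeff_reverse, coeff_reverse, htd, revAt_invol]

lemma reverse_pow_of_domain {R : Type*} [CommRing R] [IsDomain R] (p : R[X]) (n : ℕ) :
    (p ^ n).reverse = p.reverse ^ n := by
  induction n with
  | zero => simpa using reverse_C (1 : R)
  | succ n ih => rw [pow_succ, reverse_mul_of_domain, ih, pow_succ]

/-- Over `𝔽_q` with `q` odd: if `b(f) = 0` for a monic polynomial `f`
coprime to `T`, then `b` of the reversed polynomial `T^{deg f} f(1/T)`, normalized to be monic
by dividing by `f(0)`, is also `0`. -/
theorem badWitness_reverse (Fq : Type*) [Field Fq] [Fintype Fq]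
    (hq : Odd (Fintype.card Fq)) (f : Polynomial Fq) (hf : f.Monic)
    (h0 : f.coeff 0 ≠ 0) (hb : badWitness f) :
    badWitness (Polynomial.C (f.coeff 0)⁻¹ * f.reverse) := by
  obtain ⟨k, P, hPm, hPirr, hP0, hdvd, hndvd⟩ := hb
  have hP0ne : P.coeff 0 ≠ 0 := fun h => hP0 ⟨0, by rw [h]; ring⟩
  have hPne : P ≠ 0 := hPirr.ne_zero
  set Q : Polynomial Fq := Polynomial.C (P.coeff 0)⁻¹ * P.reverse with hQ
  have hPnd : P.reverse.natDegree = P.natDegree := by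
    rw [reverse_natDegree, natTrailingDegree_eq_zero.2 (Or.inr hP0ne), tsub_zero]
  have hunit : IsUnit (Polynomial.C (P.coeff 0)⁻¹) :=
    isUnit_C.2 (isUnit_iff_ne_zero.2 (inv_ne_zero hP0ne))
  have hfunit : IsUnit (Polynomial.C (f.coeff 0)⁻¹) :=
    isUnit_C.2 (isUnit_iff_ne_zero.2 (inv_ne_zero h0))
  have hQmonic : Q.Monic := by
    have hlc : P.reverse.leadingCoeff = P.coeff 0 := by
      rw [reverse_leadingCoeff, trailingCoeff,
        natTrailingDegree_eq_zero.2 (Or.inr hP0ne)]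
    rw [hQ, Polynomial.Monic, leadingCoeff_mul, leadingCoeff_C, hlc]
    exact inv_mul_cancel₀ hP0ne
  have hrevirr : Irreducible P.reverse := by
    constructor
    · intro h
      have hdeg : P.reverse.natDegree = 0 := natDegree_eq_zero_of_isUnit h
      rw [hPnd] at hdeg
      exact hPirr.not_isUnit (Polynomial.isUnit_iff_degree_eq_zero.mpr (by
        rw [Polynomial.degree_eq_natDegree hPne, hdeg]; rfl))
    · intro a b hab
      have ha0 : a.coeff 0 ≠ 0 := by
        intro h
        have h2 : P.reverse.coeff 0 = 0 := by
          rw [hab, Polynomial.mul_coeff_zero, h, zero_mul]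
        rw [coeff_zero_reverse] at h2
        exact hPne (leadingCoeff_eq_zero.1 h2)
      have hb0 : b.coeff 0 ≠ 0 := by
        intro h
        have h2 : P.reverse.coeff 0 = 0 := by
          rw [hab, Polynomial.mul_coeff_zero, h, mul_zero]
        rw [coeff_zero_reverse] at h2
        exact hPne (leadingCoeff_eq_zero.1 h2)
      have hPab : P = a.reverse * b.reverse := by
        conv_lhs => rw [← reverse_reverse_of_coeff_zero_ne_zero P hP0ne]
        rw [hab, reverse_mul_of_domain]
      rcases hPirr.isUnit_or_isUnit hPab with h | h
      · left
        have hdeg : a.reverse.natDegree = 0 := natDegree_eq_zero_of_isUnit h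
        have hand : a.natDegree = 0 := by
          have h1 := reverse_natDegree a
          have h2 : a.natTrailingDegree = 0 := natTrailingDegree_eq_zero.2 (Or.inr ha0)
          omega
        rw [Polynomial.eq_C_of_natDegree_eq_zero hand]
        exact isUnit_C.2 (isUnit_iff_ne_zero.2 (by simpa [hand] using ha0))
      · right
        have hdeg : b.reverse.natDegree = 0 := natDegree_eq_zero_of_isUnit h
        have hbnd : b.natDegree = 0 := by
          have h1 := reverse_natDegree b
          have h2 : b.natTrailingDegree = 0 := natTrailingDegree_eq_zero.2 (Or.inr hb0)
          omega
        rw [Polynomial.eq_C_of_natDegree_eq_zero hbnd]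
        exact isUnit_C.2 (isUnit_iff_ne_zero.2 (by simpa [hbnd] using hb0))
  have hQirr : Irreducible Q := by
    rw [hQ, mul_comm]
    exact (irreducible_mul_isUnit hunit).2 hrevirr
  have hQ0 : Q.coeff 0 = (P.coeff 0)⁻¹ := by
    rw [hQ, Polynomial.mul_coeff_zero, Polynomial.coeff_C_zero, coeff_zero_reverse,
      hPm.leadingCoeff, mul_one]
  have hQnonsq : ¬ ∃ a : Fq, a ^ 2 = Q.coeff 0 := by
    rintro ⟨a, ha⟩
    rw [hQ0] at ha
    refine hP0 ⟨a⁻¹, ?_⟩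
    rw [inv_pow, ha, inv_inv]
  refine ⟨k, Q, hQmonic, hQirr, hQnonsq, ?_, ?_⟩
  · have h1 : P.reverse ^ (2 * k + 1) ∣ f.reverse := by
      obtain ⟨g, hg⟩ := hdvd
      exact ⟨g.reverse, by rw [hg, reverse_mul_of_domain, reverse_pow_of_domain]⟩
    have h2 : Q ^ (2 * k + 1) ∣ f.reverse := by
      rw [hQ, mul_pow, (hunit.pow _).mul_left_dvd]
      exact h1
    exact (hfunit.dvd_mul_left).2 h2
  · intro hcon
    have h1 : P.reverse ^ (2 * k + 2) ∣ f.reverse := by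
      have h2 : Q ^ (2 * k + 2) ∣ f.reverse := (hfunit.dvd_mul_left).1 hcon
      rwa [hQ, mul_pow, (hunit.pow _).mul_left_dvd] at h2
    obtain ⟨g, hg⟩ := h1
    refine hndvd ⟨g.reverse, ?_⟩
    conv_lhs => rw [← reverse_reverse_of_coeff_zero_ne_zero f h0]
    rw [hg, reverse_mul_of_domain, reverse_pow_of_domain,
      reverse_reverse_of_coeff_zero_ne_zero P hP0ne]
end

section
/- The Euler-product identity ∑_{f monic} b(f) χ(f) u^{deg f} = ∏_{P: χ₂(P)=1} (1 - χ(P) u^{deg P})^{-1} · ∏_{Q: χ₂(Q)=-1} (1 - χ(Q²) u^{2 deg Q})^{-1} · (1 - χ(T)u)^{-1} holds as formal power series, where b is the indicator of monic polynomials representable as A² + T·B² over 𝔽_q (q odd), χ is any Dirichlet character, and χ₂ is the nontrivial quadratic character modulo T. -/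
/-!
Over `𝔽_q[T]`, `A² + T B²` is the norm form of `𝔽_q[√-T]`, which is again a polynomial ring.
A monic irreducible `P ≠ T` splits there iff `-T` is a square modulo `P`; as the norm of `-T` from
`𝔽_q[T]/(P)` to `𝔽_q` is `P(0)`, this happens iff `P(0)` is a square. A split `P` is itself of the
form `A² + T B²` (Thue's lemma applied to a square root of `-T` mod `P`), while an inert `P`
divides `A² + T B²` only if it divides both `A` and `B`; by descent, a monic `f` is represented iff
every inert prime occurs in `f` to an even power. So `b` is multiplicative, and its Euler factor
is `(1 - χ(P) u^{deg P})⁻¹` at split and ramified `P` and `(1 - χ(P²) u^{2 deg P})⁻¹` at inert `P`.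
-/

open Classical in
/-- The indicator `b` of monic polynomials representable as `A² + T·B²` over `𝔽_q`. -/
noncomputable def bInd {Fq : Type*} [Field Fq] (f : Polynomial Fq) : ℂ :=
  if ∃ A B : Polynomial Fq, f = A ^ 2 + Polynomial.X * B ^ 2 then 1 else 0

open Polynomial UniqueFactorizationMonoid

theorem FiniteField.isSquare_norm_iff {K L : Type*} [Field K] [Field L] [Finite L] [Algebra K L]
    (hK : ringChar K ≠ 2) {x : L} : IsSquare (Algebra.norm K x) ↔ IsSquare x := by
  refine ⟨fun hN => ?_, fun hx => hx.map (Algebra.norm K)⟩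
  rcases eq_or_ne x 0 with rfl | hx
  · exact IsSquare.zero
  have := Finite.of_injective _ (algebraMap K L).injective
  have := Fintype.ofFinite K
  have := Fintype.ofFinite L
  have hL : ringChar L ≠ 2 := by rwa [← Algebra.ringChar_eq K L]
  rw [FiniteField.isSquare_iff hK (Algebra.norm_ne_zero_iff.mpr hx)] at hN
  rw [FiniteField.isSquare_iff hL hx]
  obtain ⟨r, hr⟩ : ∃ r, Fintype.card K - 1 = 2 * r := by
    have := FiniteField.odd_card_of_char_ne_two hK
    exact ⟨Fintype.card K / 2, by omega⟩
  obtain ⟨m, hm⟩ : Fintype.card K - 1 ∣ Fintype.card L - 1 := by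
    simpa [← Module.card_eq_pow_finrank (K := K) (V := L)] using
      Nat.sub_dvd_pow_sub_pow (Fintype.card K) 1 (Module.finrank K L)
  -- `x ^ ((|L| - 1) / 2)` is the `r`-th power of the norm `x ^ ((|L| - 1) / (|K| - 1))`
  have hnorm : algebraMap K L (Algebra.norm K x) = x ^ m := by
    have := Fintype.one_lt_card (α := K)
    rw [FiniteField.algebraMap_norm_eq_pow, ← Fintype.card_eq_nat_card,
      ← Fintype.card_eq_nat_card, hm, Nat.mul_div_cancel_left _ (by omega)]
  have hK2 : Fintype.card K / 2 = r := by omega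
  have hL2 : Fintype.card L / 2 = m * r := by
    have := Fintype.card_pos (α := L)
    rw [hr, Nat.mul_assoc, Nat.mul_comm r] at hm
    omega
  rw [hL2, pow_mul, ← hnorm, ← map_pow, ← hK2, hN, map_one]

namespace AdjoinRoot

variable {K : Type*} [Field K] {P : K[X]}

theorem norm_neg_root (hP : P.Monic) : Algebra.norm K (-root P) = P.eval 0 := by
  let pb := powerBasis hP.ne_zero
  have := Module.Free.of_basis pb.basis
  have hgen : Algebra.norm K (root P) = (-1) ^ P.natDegree * P.eval 0 := by
    rw [← powerBasis_gen hP.ne_zero, Algebra.PowerBasis.norm_gen_eq_coeff_zero_minpoly,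
      minpoly_powerBasis_gen_of_monic hP, powerBasis_dim, coeff_zero_eq_eval_zero]
  rw [neg_eq_neg_one_mul, ← map_one (algebraMap K _), ← map_neg, map_mul,
    Algebra.norm_algebraMap, hgen, pb.finrank, powerBasis_dim, ← mul_assoc, ← mul_pow]
  simp

theorem isSquare_neg_root_iff [Finite K] (hK : ringChar K ≠ 2) (hP : P.Monic)
    (hi : Irreducible P) : IsSquare (-root P) ↔ IsSquare (P.eval 0) := by
  have := Fact.mk hi
  have := (powerBasis hP.ne_zero).finite
  have := Module.finite_of_finite K (M := AdjoinRoot P)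
  rw [← norm_neg_root hP, FiniteField.isSquare_norm_iff hK]

end AdjoinRoot

namespace PowerSeries

variable {k : Type*} [Field k]

theorem coeff_inv_one_sub_C_mul_X_pow (c : k) {d : ℕ} (hd : 0 < d) (j : ℕ) :
    coeff j (1 - C c * X ^ d)⁻¹ = if d ∣ j then c ^ (j / d) else 0 := by
  set g : PowerSeries k := mk fun j => if d ∣ j then c ^ (j / d) else 0
  suffices g = (1 - C c * X ^ d)⁻¹ by rw [← this, coeff_mk]
  have hg : g = 1 + C c * X ^ d * g := by
    ext j
    rw [map_add, coeff_one, mul_comm (C c), mul_assoc, coeff_X_pow_mul', coeff_C_mul, coeff_mk,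
      coeff_mk]
    rcases Nat.eq_zero_or_pos j with rfl | hj
    · simp [hd.ne']
    rcases le_or_gt d j with hdj | hdj
    · rw [if_neg hj.ne', if_pos hdj, zero_add, Nat.div_eq_sub_div hd hdj]
      simp only [Nat.dvd_sub_iff_left hdj dvd_rfl]
      split_ifs <;> simp [pow_succ']
    · simp [hj.ne', hdj.not_ge, Nat.not_dvd_of_pos_of_lt hj hdj]
  rw [eq_inv_iff_mul_eq_one (by simp [hd.ne'])]
  linear_combination hg

theorem coeff_prod_inv_one_sub_C_mul_X_pow {ι : Type*} [DecidableEq ι] (s : Finset ι)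
    (c : ι → k) {D : ι → ℕ} (hD : ∀ i ∈ s, 0 < D i) (n : ℕ) :
    coeff n (∏ i ∈ s, (1 - C (c i) * X ^ D i)⁻¹) =
      ∑ l ∈ (s.finsuppAntidiag n).filter (fun l => ∀ i ∈ s, D i ∣ l i),
        ∏ i ∈ s, c i ^ (l i / D i) := by
  rw [coeff_prod, Finset.sum_filter]
  refine Finset.sum_congr rfl fun l _ => ?_
  rw [Finset.prod_congr rfl fun i hi => coeff_inv_one_sub_C_mul_X_pow _ (hD i hi) _,
    Finset.prod_ite_zero]

end PowerSeries

namespace Polynomial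

section SqAddXMulSq

variable {R : Type*} [CommRing R]

variable (R) in
def sqAddXMulSq : Submonoid R[X] where
  carrier := {f | ∃ A B : R[X], f = A ^ 2 + X * B ^ 2}
  one_mem' := ⟨1, 0, by ring⟩
  mul_mem' := by
    rintro _ _ ⟨A, B, rfl⟩ ⟨C, D, rfl⟩
    exact ⟨A * C - X * B * D, A * D + B * C, by ring⟩

theorem mem_sqAddXMulSq {f : R[X]} : f ∈ sqAddXMulSq R ↔ ∃ A B : R[X], f = A ^ 2 + X * B ^ 2 :=
  Iff.rfl

variable [IsDomain R]

theorem degree_sq_ne_degree_X_mul_sq {A B : R[X]} (h : A ≠ 0 ∨ B ≠ 0) :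
    (A ^ 2).degree ≠ (X * B ^ 2).degree := by
  rcases eq_or_ne A 0 with rfl | hA
  · rw [zero_pow two_ne_zero, degree_zero, ne_comm, Ne, degree_eq_bot]
    simpa using h
  rcases eq_or_ne B 0 with rfl | hB
  · rw [zero_pow two_ne_zero, mul_zero, degree_zero, Ne, degree_eq_bot]
    simpa using hA
  rw [degree_eq_natDegree (pow_ne_zero 2 hA), degree_eq_natDegree (by simp [hB]),
    natDegree_pow, natDegree_X_mul (pow_ne_zero 2 hB), natDegree_pow]
  norm_cast
  omega

theorem sq_add_X_mul_sq_ne_zero {A B : R[X]} (h : A ≠ 0 ∨ B ≠ 0) : A ^ 2 + X * B ^ 2 ≠ 0 :=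
  fun h0 => degree_sq_ne_degree_X_mul_sq h (by rw [eq_neg_of_add_eq_zero_left h0, degree_neg])

theorem isSquare_leadingCoeff_sq_add_X_mul_sq (A B : R[X]) :
    IsSquare (A ^ 2 + X * B ^ 2).leadingCoeff := by
  by_cases h : A = 0 ∧ B = 0
  · simp [h.1, h.2]
  rcases (degree_sq_ne_degree_X_mul_sq (not_and_or.mp h)).lt_or_gt with hlt | hlt
  · rw [leadingCoeff_add_of_degree_lt hlt, leadingCoeff_mul, leadingCoeff_X, one_mul,
      leadingCoeff_pow]
    exact IsSquare.sq _
  · rw [leadingCoeff_add_of_degree_lt' hlt, leadingCoeff_pow]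
    exact IsSquare.sq _

end SqAddXMulSq

theorem natDegree_prod_pow {R : Type*} [CommSemiring R] [Nontrivial R] {s : Finset R[X]}
    (hs : ∀ P ∈ s, P.Monic) (k : R[X] → ℕ) :
    (∏ P ∈ s, P ^ k P).natDegree = ∑ P ∈ s, k P * P.natDegree := by
  rw [natDegree_prod_of_monic _ _ fun P hP => (hs P hP).pow _]
  exact Finset.sum_congr rfl fun P hP => (hs P hP).natDegree_pow _

variable {K : Type*} [Field K]

theorem exists_dvd_sub_mul_of_natDegree_lt {P : K[X]} (hP : P ≠ 0) (S : K[X]) {a b : ℕ}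
    (hab : P.natDegree < a + b) :
    ∃ A B : K[X], (A ≠ 0 ∨ B ≠ 0) ∧ A.degree < a ∧ B.degree < b ∧ P ∣ A - S * B := by
  let pb := AdjoinRoot.powerBasis hP
  have := pb.finite
  let L : degreeLT K a × degreeLT K b →ₗ[K] AdjoinRoot P :=
    (AdjoinRoot.mkₐ P).toLinearMap ∘ₗ
      ((degreeLT K a).subtype.coprod (-(LinearMap.mulLeft K S ∘ₗ (degreeLT K b).subtype)))
  have hrank :
      Module.finrank K (AdjoinRoot P) < Module.finrank K (degreeLT K a × degreeLT K b) := by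
    rwa [Module.finrank_prod, (degreeLTEquiv K a).finrank_eq, (degreeLTEquiv K b).finrank_eq,
      Module.finrank_fin_fun, Module.finrank_fin_fun, pb.finrank, AdjoinRoot.powerBasis_dim]
  obtain ⟨⟨⟨A, hA⟩, ⟨B, hB⟩⟩, hker, hne⟩ :=
    (Submodule.ne_bot_iff _).mp (LinearMap.ker_ne_bot_of_finrank_lt (f := L) hrank)
  refine ⟨A, B, ?_, mem_degreeLT.mp hA, mem_degreeLT.mp hB, ?_⟩
  · by_contra! h
    exact hne (by simp [h.1, h.2])
  · rw [← AdjoinRoot.mk_eq_zero]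
    simpa [L, sub_eq_add_neg] using hker

theorem mem_sqAddXMulSq_of_isSquare_neg_root {P : K[X]} (hP : P.Monic)
    (hsq : IsSquare (-AdjoinRoot.root P)) : P ∈ sqAddXMulSq K := by
  obtain ⟨S, hS⟩ : ∃ S, P ∣ S ^ 2 + X := by
    obtain ⟨s, hs⟩ := hsq
    obtain ⟨S, rfl⟩ := AdjoinRoot.mk_surjective s
    refine ⟨S, ?_⟩
    rw [← AdjoinRoot.mk_eq_zero, map_add, map_pow, AdjoinRoot.mk_X, sq, ← hs, neg_add_cancel]
  -- A short solution of `A ≡ S B (mod P)` makes `A ^ 2 + X * B ^ 2` a multiple of `P` of degree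
  -- at most `deg P`, hence `P` times its leading coefficient, which is a square.
  set d := P.natDegree
  obtain ⟨A, B, hAB, hA, hB, hdvd⟩ :=
    exists_dvd_sub_mul_of_natDegree_lt hP.ne_zero S (a := d / 2 + 1) (b := (d + 1) / 2)
      (by omega)
  have hN : P ∣ A ^ 2 + X * B ^ 2 := by
    have : A ^ 2 + X * B ^ 2 = (A - S * B) * (A + S * B) + B ^ 2 * (S ^ 2 + X) := by ring
    rw [this]
    exact dvd_add (dvd_mul_of_dvd_left hdvd _) (dvd_mul_of_dvd_right hS _)
  have hdeg : (A ^ 2 + X * B ^ 2).natDegree ≤ d := by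
    refine natDegree_add_le_of_degree_le ((natDegree_pow_le).trans ?_) ?_
    · rcases eq_or_ne A 0 with rfl | hA0
      · simp
      · have := (natDegree_lt_iff_degree_lt hA0).mpr hA
        omega
    · rcases eq_or_ne B 0 with rfl | hB0
      · simp
      · have := (natDegree_lt_iff_degree_lt hB0).mpr hB
        rw [natDegree_X_mul (pow_ne_zero 2 hB0), natDegree_pow]
        omega
  obtain ⟨c, hc⟩ := isSquare_leadingCoeff_sq_add_X_mul_sq A B
  have hc0 : c ≠ 0 := by
    rintro rfl
    exact sq_add_X_mul_sq_ne_zero hAB (leadingCoeff_eq_zero.mp (by simpa using hc))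
  have heq := eq_leadingCoeff_mul_of_monic_of_dvd_of_natDegree_le hP hN hdeg
  rw [hc, map_mul] at heq
  have hunit : C c⁻¹ * C c = 1 := by rw [← map_mul, inv_mul_cancel₀ hc0, map_one]
  exact ⟨C c⁻¹ * A, C c⁻¹ * B, by
    linear_combination (-(C c⁻¹) ^ 2) * heq - P * (1 + C c⁻¹ * C c) * hunit⟩

theorem dvd_and_dvd_of_dvd_sq_add_X_mul_sq {P A B : K[X]} (hi : Irreducible P)
    (hns : ¬IsSquare (-AdjoinRoot.root P)) (h : P ∣ A ^ 2 + X * B ^ 2) : P ∣ A ∧ P ∣ B := by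
  have := Fact.mk hi
  simp only [← AdjoinRoot.mk_eq_zero, map_add, map_mul, map_pow, AdjoinRoot.mk_X] at h ⊢
  have hB : AdjoinRoot.mk P B = 0 := by
    by_contra hB
    exact hns ⟨AdjoinRoot.mk P A / AdjoinRoot.mk P B, by
      field_simp
      linear_combination -h⟩
  rw [hB, zero_pow two_ne_zero, mul_zero, add_zero, pow_eq_zero_iff two_ne_zero] at h
  exact ⟨h, hB⟩

open Classical in
-- over a finite field of odd characteristic, the least power of a monic irreducible `P` that
-- lies in `sqAddXMulSq K`
noncomputable def normExponent (P : K[X]) : ℕ :=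
  if IsSquare (P.eval 0) then 1 else 2

theorem normExponent_of_isSquare {P : K[X]} (h : IsSquare (P.eval 0)) : normExponent P = 1 :=
  if_pos h

theorem normExponent_of_not_isSquare {P : K[X]} (h : ¬IsSquare (P.eval 0)) :
    normExponent P = 2 :=
  if_neg h

section Factorization

variable [DecidableEq K]

theorem Monic.factorization_of_irreducible {P : K[X]} (hP : P.Monic)
    (hi : Irreducible P) : factorization P = Finsupp.single P 1 := by
  simp [factorization, normalizedFactors_irreducible hi, hP.normalize_eq_self]

theorem factorization_prod_pow {s : Finset K[X]}
    (hs : ∀ P ∈ s, P.Monic ∧ Irreducible P) (k : K[X] → ℕ) :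
    factorization (∏ P ∈ s, P ^ k P) = ∑ P ∈ s, Finsupp.single P (k P) := by
  induction s using Finset.induction_on with
  | empty => simp
  | insert Q s hQ ih =>
    have hs' : ∀ P ∈ s, P.Monic ∧ Irreducible P :=
      fun P hP => hs P (Finset.mem_insert_of_mem hP)
    obtain ⟨hQm, hQi⟩ := hs Q (Finset.mem_insert_self Q s)
    rw [Finset.prod_insert hQ, Finset.sum_insert hQ,
      factorization_mul (pow_ne_zero _ hQm.ne_zero)
        (Finset.prod_ne_zero_iff.mpr fun P hP => pow_ne_zero _ (hs' P hP).1.ne_zero),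
      factorization_pow, hQm.factorization_of_irreducible hQi, ih hs', Finsupp.smul_single,
      smul_eq_mul, mul_one]

theorem Monic.prod_pow_factorization {f : K[X]} (hf : f.Monic) {s : Finset K[X]}
    (hs : (factorization f).support ⊆ s) : ∏ P ∈ s, P ^ factorization f P = f := by
  rw [← Finset.prod_subset hs fun P _ hP => by rw [Finsupp.notMem_support_iff.mp hP, pow_zero]]
  simp only [support_factorization, factorization_eq_count]
  rw [← Finset.prod_multiset_count, prod_normalizedFactors_eq hf.ne_zero, hf.normalize_eq_self]

theorem mem_support_factorization_iff {f P : K[X]} (hf : f ≠ 0) :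
    P ∈ (factorization f).support ↔ P.Monic ∧ Irreducible P ∧ P ∣ f := by
  rw [support_factorization, Multiset.mem_toFinset, Polynomial.mem_normalizedFactors_iff hf]
  tauto

theorem Monic.natDegree_eq_sum_factorization {f : K[X]} (hf : f.Monic) :
    f.natDegree = ∑ P ∈ (factorization f).support, factorization f P * P.natDegree := by
  conv_lhs => rw [← hf.prod_pow_factorization subset_rfl]
  exact natDegree_prod_pow (fun P hP => ((mem_support_factorization_iff hf.ne_zero).mp hP).1) _

theorem even_factorization_of_mem_sqAddXMulSq {P f : K[X]} (hP : P.Monic)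
    (hi : Irreducible P) (hns : ¬IsSquare (-AdjoinRoot.root P)) (hf : f ∈ sqAddXMulSq K)
    (hf0 : f ≠ 0) : Even (factorization f P) := by
  induction hn : f.natDegree using Nat.strong_induction_on generalizing f with
  | _ n ih =>
    obtain ⟨A, B, rfl⟩ := hf
    by_cases hPf : P ∣ A ^ 2 + X * B ^ 2
    · obtain ⟨⟨A', rfl⟩, ⟨B', rfl⟩⟩ := dvd_and_dvd_of_dvd_sq_add_X_mul_sq hi hns hPf
      have hfac : (P * A') ^ 2 + X * (P * B') ^ 2 = P ^ 2 * (A' ^ 2 + X * B' ^ 2) := by ring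
      rw [hfac] at hf0 hn ⊢
      have hg0 := right_ne_zero_of_mul hf0
      rw [factorization_mul (left_ne_zero_of_mul hf0) hg0, factorization_pow,
        hP.factorization_of_irreducible hi, Finsupp.add_apply, Finsupp.smul_apply,
        Finsupp.single_eq_same, smul_eq_mul, mul_one]
      refine even_two.add (ih _ ?_ ⟨A', B', rfl⟩ hg0 rfl)
      rw [← hn, natDegree_mul (left_ne_zero_of_mul hf0) hg0, natDegree_pow]
      have := hi.natDegree_pos
      omega
    · rw [factorization_eq_count, Multiset.count_eq_zero.mpr fun hmem =>
        hPf (dvd_of_mem_normalizedFactors hmem)]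
      exact Even.zero

theorem mem_sqAddXMulSq_iff [Finite K] (hK : ringChar K ≠ 2) {f : K[X]} (hf : f.Monic) :
    f ∈ sqAddXMulSq K ↔ ∀ P, normExponent P ∣ factorization f P := by
  constructor
  · intro hmem P
    by_cases hsq : IsSquare (P.eval 0)
    · rw [normExponent_of_isSquare hsq]
      exact one_dvd _
    rw [normExponent_of_not_isSquare hsq, ← even_iff_two_dvd]
    by_cases hP : P ∈ (factorization f).support
    · obtain ⟨hPm, hi, -⟩ := (mem_support_factorization_iff hf.ne_zero).mp hP
      exact even_factorization_of_mem_sqAddXMulSq hPm hi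
        (mt (AdjoinRoot.isSquare_neg_root_iff hK hPm hi).mp hsq) hmem hf.ne_zero
    · rw [Finsupp.notMem_support_iff.mp hP]
      exact Even.zero
  · intro hdvd
    rw [← hf.prod_pow_factorization subset_rfl]
    refine Submonoid.prod_mem _ fun P hP => ?_
    obtain ⟨hPm, hi, -⟩ := (mem_support_factorization_iff hf.ne_zero).mp hP
    by_cases hsq : IsSquare (P.eval 0)
    · exact Submonoid.pow_mem _ (mem_sqAddXMulSq_of_isSquare_neg_root hPm
        ((AdjoinRoot.isSquare_neg_root_iff hK hPm hi).mpr hsq)) _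
    · obtain ⟨m, hm⟩ := normExponent_of_not_isSquare hsq ▸ hdvd P
      exact ⟨P ^ m, 0, by rw [hm]; ring⟩

theorem factorization_prod_pow_div_natDegree {s : Finset K[X]}
    (hs : ∀ P ∈ s, P.Monic ∧ Irreducible P) (l : K[X] →₀ ℕ) (P : K[X]) :
    factorization (∏ Q ∈ s, Q ^ (l Q / Q.natDegree)) P =
      if P ∈ s then l P / P.natDegree else 0 := by
  rw [factorization_prod_pow hs, Finsupp.finsetSum_apply]
  simp [Finsupp.single_apply]

theorem injOn_prod_pow_div_natDegree {s : Finset K[X]} (hs : ∀ P ∈ s, P.Monic ∧ Irreducible P) :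
    Set.InjOn (fun l : K[X] →₀ ℕ => ∏ P ∈ s, P ^ (l P / P.natDegree))
      {l | l.support ⊆ s ∧ ∀ P ∈ s, P.natDegree ∣ l P} := by
  have hl : ∀ l : K[X] →₀ ℕ, l.support ⊆ s → (∀ P ∈ s, P.natDegree ∣ l P) → ∀ P,
      l P = factorization (∏ Q ∈ s, Q ^ (l Q / Q.natDegree)) P * P.natDegree := by
    intro l hsupp hdvd P
    rw [factorization_prod_pow_div_natDegree hs]
    split_ifs with hP
    · exact (Nat.div_mul_cancel (hdvd P hP)).symm
    · simpa using fun h => hP (hsupp h)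
  intro l₁ h₁ l₂ h₂ h
  ext P
  rw [hl l₁ h₁.1 h₁.2, hl l₂ h₂.1 h₂.2]
  exact congrArg (fun f => factorization f P * P.natDegree) h

theorem sum_prod_pow_eq_finsum {M : Type*} [AddCommMonoid M] (F : K[X] → M) {s : Finset K[X]}
    (e : K[X] → ℕ) (n : ℕ) (hs : ∀ P ∈ s, P.Monic ∧ Irreducible P)
    (hn : ∀ P : K[X], P.Monic → Irreducible P → P.natDegree ≤ n → P ∈ s) :
    ∑ l ∈ (s.finsuppAntidiag n).filter (fun l => ∀ P ∈ s, e P * P.natDegree ∣ l P),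
        F (∏ P ∈ s, P ^ (l P / P.natDegree)) =
      ∑ᶠ (f : K[X]) (_ : f.Monic ∧ f.natDegree = n ∧ ∀ P, e P ∣ factorization f P), F f := by
  have hdeg : ∀ P ∈ s, 0 < P.natDegree := fun P hP => (hs P hP).2.natDegree_pos
  set T := (s.finsuppAntidiag n).filter fun l => ∀ P ∈ s, e P * P.natDegree ∣ l P
  set Φ : (K[X] →₀ ℕ) → K[X] := fun l => ∏ P ∈ s, P ^ (l P / P.natDegree)
  have hT : ∀ l, l ∈ T ↔ (s.sum l = n ∧ l.support ⊆ s) ∧ ∀ P ∈ s, e P * P.natDegree ∣ l P :=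
    fun l => by simp only [T, Finset.mem_filter, Finset.mem_finsuppAntidiag]
  rw [finsum_cond_eq_sum_of_cond_iff (t := T.image Φ) _ fun {f} _ => ?_,
    Finset.sum_image <| (injOn_prod_pow_div_natDegree hs).mono fun l hl =>
      show l.support ⊆ s ∧ ∀ P ∈ s, P.natDegree ∣ l P from
        ⟨((hT l).mp hl).1.2, fun P hP => dvd_of_mul_left_dvd (((hT l).mp hl).2 P hP)⟩]
  simp only [Finset.mem_image, hT]
  constructor
  · rintro ⟨hf, rfl, hdvd⟩
    have hsupp : (factorization f).support ⊆ s := fun P hP => by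
      obtain ⟨hPm, hi, hPf⟩ := (mem_support_factorization_iff hf.ne_zero).mp hP
      exact hn P hPm hi (natDegree_le_of_dvd hPf hf.ne_zero)
    refine ⟨Finsupp.onFinset s (fun P => factorization f P * P.natDegree) fun P hP =>
      hsupp (Finsupp.mem_support_iff.mpr (left_ne_zero_of_mul hP)), ⟨⟨?_,
      Finsupp.support_onFinset_subset⟩, fun P _ => Nat.mul_dvd_mul_right (hdvd P) _⟩, ?_⟩
    · rw [hf.natDegree_eq_sum_factorization]
      refine (Finset.sum_subset hsupp fun P _ hP => ?_).symm
      rw [Finsupp.onFinset_apply, Finsupp.notMem_support_iff.mp hP, zero_mul]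
    · simp only [Φ, Finsupp.onFinset_apply]
      refine (Finset.prod_congr rfl fun P hP => ?_).trans (hf.prod_pow_factorization hsupp)
      rw [Nat.mul_div_cancel _ (hdeg P hP)]
  · rintro ⟨l, ⟨⟨hsum, -⟩, hdvd⟩, rfl⟩
    refine ⟨monic_prod_of_monic _ _ fun P hP => (hs P hP).1.pow _, ?_, fun P => ?_⟩
    · rw [natDegree_prod_pow fun P hP => (hs P hP).1, ← hsum]
      exact Finset.sum_congr rfl fun P hP => Nat.div_mul_cancel (dvd_of_mul_left_dvd (hdvd P hP))
    · rw [factorization_prod_pow_div_natDegree hs]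
      split_ifs with hP
      · obtain ⟨m, hm⟩ := hdvd P hP
        rw [hm, mul_comm (e P), mul_assoc, Nat.mul_div_cancel_left _ (hdeg P hP)]
        exact Dvd.intro m rfl
      · exact dvd_zero _

theorem coeff_prod_inv_one_sub_eq_finsum {R : Type*} [Field R] (χ : K[X] →* R) {s : Finset K[X]}
    (e : K[X] → ℕ) (n : ℕ) (hs : ∀ P ∈ s, P.Monic ∧ Irreducible P) (he : ∀ P ∈ s, 0 < e P)
    (hn : ∀ P : K[X], P.Monic → Irreducible P → P.natDegree ≤ n → P ∈ s) :
    PowerSeries.coeff n (∏ P ∈ s,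
        (1 - PowerSeries.C (χ P ^ e P) * PowerSeries.X ^ (e P * P.natDegree))⁻¹) =
      ∑ᶠ (f : K[X]) (_ : f.Monic ∧ f.natDegree = n ∧ ∀ P, e P ∣ factorization f P), χ f := by
  have hdeg : ∀ P ∈ s, 0 < P.natDegree := fun P hP => (hs P hP).2.natDegree_pos
  rw [PowerSeries.coeff_prod_inv_one_sub_C_mul_X_pow s _
    fun P hP => Nat.mul_pos (he P hP) (hdeg P hP), ← sum_prod_pow_eq_finsum χ e n hs hn]
  refine Finset.sum_congr rfl fun l hl => ?_
  rw [map_prod]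
  refine Finset.prod_congr rfl fun P hP => ?_
  obtain ⟨m, hm⟩ := (Finset.mem_filter.mp hl).2 P hP
  have h₁ : l P / (e P * P.natDegree) = m := by
    rw [hm, Nat.mul_div_cancel_left _ (Nat.mul_pos (he P hP) (hdeg P hP))]
  have h₂ : l P / P.natDegree = e P * m := by
    rw [hm, mul_right_comm, Nat.mul_div_cancel _ (hdeg P hP)]
  rw [h₁, h₂, map_pow, pow_mul]

theorem finsum_bInd_mul_eq [Finite K] (hK : ringChar K ≠ 2) (g : K[X] → ℂ) (n : ℕ) :
    ∑ᶠ (f : K[X]) (_ : f.Monic ∧ f.natDegree = n), bInd f * g f =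
      ∑ᶠ (f : K[X]) (_ : f.Monic ∧ f.natDegree = n ∧ ∀ P, normExponent P ∣ factorization f P),
        g f := by
  classical
  refine finsum_congr fun f => ?_
  rw [finsum_eq_if, finsum_eq_if]
  by_cases hf : f.Monic ∧ f.natDegree = n
  · have hrep := mem_sqAddXMulSq_iff hK hf.1
    rw [mem_sqAddXMulSq] at hrep
    simp only [bInd, hf, hrep, true_and, if_true]
    split_ifs <;> simp
  · rw [if_neg hf, if_neg fun h => hf ⟨h.1, h.2.1⟩]

end Factorization

theorem finite_setOf_natDegree_le [Finite K] (n : ℕ) : {f : K[X] | f.natDegree ≤ n}.Finite := by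
  have : Finite (degreeLT K (n + 1)) := Finite.of_equiv _ (degreeLTEquiv K (n + 1)).toEquiv.symm
  refine (Set.toFinite (degreeLT K (n + 1) : Set K[X])).subset fun f hf => ?_
  rw [SetLike.mem_coe, mem_degreeLT]
  exact (degree_le_natDegree.trans (WithBot.coe_le_coe.mpr hf)).trans_lt
    (WithBot.coe_lt_coe.mpr n.lt_succ_self)

theorem Monic.eq_X_of_irreducible_of_eval_zero {P : K[X]} (hP : P.Monic) (hi : Irreducible P)
    (h0 : P.eval 0 = 0) : P = X :=
  (eq_of_monic_of_associated monic_X hP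
    (irreducible_X.associated_of_dvd hi (X_dvd_iff.mpr (by rwa [coeff_zero_eq_eval_zero])))).symm

theorem prod_eulerFactors_eq {R : Type*} [Field R] (χ : K[X] →* R) (n : ℕ) {s : Finset K[X]}
    (hs : ∀ P, P ∈ s ↔ P = X ∨ P.Monic ∧ Irreducible P ∧ P.natDegree ≤ n) :
    (∏ᶠ (P : K[X]) (_ : P.Monic ∧ Irreducible P ∧ P.natDegree ≤ n ∧
          P.eval 0 ≠ 0 ∧ ∃ a : K, a ^ 2 = P.eval 0),
        (1 - PowerSeries.C (χ P) * PowerSeries.X ^ P.natDegree)⁻¹) *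
      (∏ᶠ (P : K[X]) (_ : P.Monic ∧ Irreducible P ∧ P.natDegree ≤ n ∧
          P.eval 0 ≠ 0 ∧ ¬∃ a : K, a ^ 2 = P.eval 0),
        (1 - PowerSeries.C (χ (P ^ 2)) * PowerSeries.X ^ (2 * P.natDegree))⁻¹) *
      (1 - PowerSeries.C (χ X) * PowerSeries.X)⁻¹ =
    ∏ P ∈ s, (1 - PowerSeries.C (χ P ^ normExponent P) *
      PowerSeries.X ^ (normExponent P * P.natDegree))⁻¹ := by
  classical
  have hX : ∀ P : K[X], P.Monic → Irreducible P → (P.eval 0 = 0 ↔ P = X) := fun P hP hi =>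
    ⟨hP.eq_X_of_irreducible_of_eval_zero hi, by rintro rfl; exact eval_X⟩
  have hsq_iff : ∀ c : K, (∃ a, a ^ 2 = c) ↔ IsSquare c := fun c => by
    simp only [isSquare_iff_exists_sq, eq_comm]
  have hXs : X ∈ s.filter fun P => IsSquare (P.eval 0) := by simp [hs]
  rw [← Finset.prod_filter_mul_prod_filter_not s fun P => IsSquare (P.eval 0),
    Finset.prod_congr (s₁ := s.filter fun P => IsSquare (P.eval 0)) rfl fun P hP => by
      rw [normExponent_of_isSquare (Finset.mem_filter.mp hP).2, pow_one, one_mul],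
    Finset.prod_congr (s₁ := s.filter fun P => ¬IsSquare (P.eval 0)) rfl fun P hP => by
      rw [normExponent_of_not_isSquare (Finset.mem_filter.mp hP).2, ← map_pow],
    ← Finset.mul_prod_erase _ _ hXs,
    finprod_cond_eq_prod_of_cond_iff _
      (t := (s.filter fun P => IsSquare (P.eval 0)).erase X) fun {P} _ => ?_,
    finprod_cond_eq_prod_of_cond_iff _
      (t := s.filter fun P => ¬IsSquare (P.eval 0)) fun {P} _ => ?_]
  · rw [natDegree_X, pow_one]
    ring
  · rw [Finset.mem_filter, hs, hsq_iff]
    constructor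
    · rintro ⟨hP, hi, hd, -, hns⟩
      exact ⟨Or.inr ⟨hP, hi, hd⟩, hns⟩
    · rintro ⟨rfl | ⟨hP, hi, hd⟩, hns⟩
      · exact absurd (by simp) hns
      · exact ⟨hP, hi, hd, fun h0 => hns (by rw [h0]; exact IsSquare.zero), hns⟩
  · rw [Finset.mem_erase, Finset.mem_filter, hs, hsq_iff]
    constructor
    · rintro ⟨hP, hi, hd, h0, hP0⟩
      exact ⟨mt (hX P hP hi).mpr h0, Or.inr ⟨hP, hi, hd⟩, hP0⟩
    · rintro ⟨hPX, rfl | ⟨hP, hi, hd⟩, hP0⟩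
      · exact absurd rfl hPX
      · exact ⟨hP, hi, hd, mt (hX P hP hi).mp hPX, hP0⟩

end Polynomial

theorem euler_product_b_general
    (Fq : Type*) [Field Fq] [Fintype Fq] (hq : Odd (Fintype.card Fq))
    (Q₀ : Polynomial Fq) (χ : Polynomial Fq → ℂ)
    (hmul : ∀ f g : Polynomial Fq, χ (f * g) = χ f * χ g)
    (hne : ∀ f : Polynomial Fq, χ f ≠ 0 ↔ IsCoprime f Q₀) :
    ∀ n : ℕ,
      (∑ᶠ (f : Polynomial Fq) (_ : f.Monic ∧ f.natDegree = n), bInd f * χ f)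
        = PowerSeries.coeff (R := ℂ) n
          ((∏ᶠ (P : Polynomial Fq) (_ : P.Monic ∧ Irreducible P ∧ P.natDegree ≤ n ∧
                P.eval 0 ≠ 0 ∧ ∃ a : Fq, a ^ 2 = P.eval 0),
              ((1 : PowerSeries ℂ) - PowerSeries.C (R := ℂ) (χ P) * PowerSeries.X ^ P.natDegree)⁻¹)
            * (∏ᶠ (P : Polynomial Fq) (_ : P.Monic ∧ Irreducible P ∧ P.natDegree ≤ n ∧
                P.eval 0 ≠ 0 ∧ ¬ ∃ a : Fq, a ^ 2 = P.eval 0),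
              ((1 : PowerSeries ℂ) - PowerSeries.C (R := ℂ) (χ (P ^ 2))
                  * PowerSeries.X ^ (2 * P.natDegree))⁻¹)
            * ((1 : PowerSeries ℂ) - PowerSeries.C (R := ℂ) (χ Polynomial.X) * PowerSeries.X)⁻¹) := by
  classical
  intro n
  have hK : ringChar Fq ≠ 2 := by
    rw [Ne, FiniteField.even_card_iff_char_two, Nat.odd_iff.mp hq]
    decide
  have hχ1 : χ 1 = 1 :=
    mul_left_cancel₀ ((hne 1).mpr isCoprime_one_left) (by rw [← hmul, mul_one, mul_one])
  let χ' : Fq[X] →* ℂ := ⟨⟨χ, hχ1⟩, hmul⟩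
  let s : Finset Fq[X] := insert X ((finite_setOf_natDegree_le n).toFinset.filter
    fun P => P.Monic ∧ Irreducible P)
  have hs : ∀ P, P ∈ s ↔ P = X ∨ P.Monic ∧ Irreducible P ∧ P.natDegree ≤ n := by
    intro P
    simp only [s, Finset.mem_insert, Finset.mem_filter, Set.Finite.mem_toFinset]
    tauto
  have hsi : ∀ P ∈ s, P.Monic ∧ Irreducible P := fun P hP => by
    rcases (hs P).mp hP with rfl | ⟨hP, hi, -⟩
    exacts [⟨monic_X, irreducible_X⟩, ⟨hP, hi⟩]
  have he : ∀ P ∈ s, 0 < normExponent P := fun P _ => by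
    unfold normExponent
    split_ifs <;> norm_num
  rw [show χ = χ' from rfl, prod_eulerFactors_eq χ' n hs, finsum_bInd_mul_eq hK,
    coeff_prod_inv_one_sub_eq_finsum χ' _ n hsi he
      fun P hP hi hd => (hs P).mpr (Or.inr ⟨hP, hi, hd⟩)]

/-- The Euler-product identity
`Σ_{f monic} b(f) χ(f) u^{deg f}
  = ∏_{χ₂(P)=1} (1-χ(P)u^{deg P})⁻¹ · ∏_{χ₂(Q)=-1} (1-χ(Q²)u^{2 deg Q})⁻¹ · (1-χ(T)u)⁻¹`
as formal power series (stated coefficient-wise; Euler factors of degree `> n` do not affect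
the coefficient of `u^n`). Here `χ` is any Dirichlet character modulo `Q₀` and `χ₂(P) = ±1`
according as `P(0)` is a nonzero square or a nonsquare. -/
theorem euler_product_b
    (Fq : Type*) [Field Fq] [Fintype Fq] (hq : Odd (Fintype.card Fq))
    (Q₀ : Polynomial Fq) (hQ₀ : Q₀ ≠ 0) (χ : Polynomial Fq → ℂ)
    (hmul : ∀ f g : Polynomial Fq, χ (f * g) = χ f * χ g)
    (hne : ∀ f : Polynomial Fq, χ f ≠ 0 ↔ IsCoprime f Q₀)
    (hper : ∀ f g : Polynomial Fq, Q₀ ∣ (f - g) → χ f = χ g) :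
    ∀ n : ℕ,
      (∑ᶠ (f : Polynomial Fq) (_ : f.Monic ∧ f.natDegree = n), bInd f * χ f)
        = PowerSeries.coeff (R := ℂ) n
          ((∏ᶠ (P : Polynomial Fq) (_ : P.Monic ∧ Irreducible P ∧ P.natDegree ≤ n ∧
                P.eval 0 ≠ 0 ∧ ∃ a : Fq, a ^ 2 = P.eval 0),
              ((1 : PowerSeries ℂ) - PowerSeries.C (R := ℂ) (χ P) * PowerSeries.X ^ P.natDegree)⁻¹)
            * (∏ᶠ (P : Polynomial Fq) (_ : P.Monic ∧ Irreducible P ∧ P.natDegree ≤ n ∧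
                P.eval 0 ≠ 0 ∧ ¬ ∃ a : Fq, a ^ 2 = P.eval 0),
              ((1 : PowerSeries ℂ) - PowerSeries.C (R := ℂ) (χ (P ^ 2))
                  * PowerSeries.X ^ (2 * P.natDegree))⁻¹)
            * ((1 : PowerSeries ℂ) - PowerSeries.C (R := ℂ) (χ Polynomial.X) * PowerSeries.X)⁻¹) :=
  euler_product_b_general Fq hq Q₀ χ hmul hne
end

section
/- For Re(s) > 1, the Dirichlet series F(s) = Σ_{n≥1} b(n) n^{-s}, where b is the indicator of integers expressible as a sum of two squares, satisfies the Euler product F(s) = (1-2^{-s})^{-1} · ∏_{q ≡ 1 mod 4} (1-q^{-s})^{-1} · ∏_{r ≡ 3 mod 4} (1-r^{-2s})^{-1}, with q, r ranging over primes in the indicated residue classes. -/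
/-!
By the two-squares theorem, `n` is a sum of two squares iff every prime `r ≡ 3 mod 4` occurs
in `n` to an even power. Hence the indicator `b` is multiplicative, with `b (p ^ e) = 1` for
`p ≢ 3 mod 4` and `b (r ^ e) = [e even]` for `r ≡ 3 mod 4`, and being bounded it has an
absolutely convergent Euler product for `Re s > 1` whose local factors are `(1 - p^{-s})⁻¹` and
`∑_{e even} r^{-es} = (1 - r^{-2s})⁻¹`. The partial products over each residue class converge
because `∑ log (1 - p^{-w})` converges absolutely for `Re w > 1`; regrouping the Euler product
according to `p = 2`, `p ≡ 1` and `p ≡ 3 mod 4` gives the formula.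
-/

open Classical in
/-- Indicator of integers expressible as a sum of two squares. -/
noncomputable def sumTwoSquaresInd (n : ℕ) : ℂ :=
  if ∃ a b : ℕ, n = a ^ 2 + b ^ 2 then 1 else 0

open Complex

theorem Nat.eq_sq_add_sq_iff_forall_even_factorization {n : ℕ} :
    (∃ x y, n = x ^ 2 + y ^ 2) ↔ ∀ q, q % 4 = 3 → Even (n.factorization q) := by
  rw [Nat.eq_sq_add_sq_iff]
  refine ⟨fun h q hq3 ↦ ?_, fun h q hq hq3 ↦ ?_⟩
  · by_cases hq : q ∈ n.primeFactors
    · rw [n.factorization_def (Nat.prime_of_mem_primeFactors hq)]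
      exact h q hq hq3
    · rw [← Nat.support_factorization, Finsupp.notMem_support_iff] at hq
      simp [hq]
  · rw [← n.factorization_def (Nat.prime_of_mem_primeFactors hq)]
    exact h q hq3

theorem Nat.Coprime.eq_sq_add_sq_mul_iff {m n : ℕ} (h : m.Coprime n) :
    (∃ x y, m * n = x ^ 2 + y ^ 2) ↔ (∃ x y, m = x ^ 2 + y ^ 2) ∧ ∃ x y, n = x ^ 2 + y ^ 2 := by
  have disjoint : ∀ q, q % 4 = 3 → m.factorization q = 0 ∨ n.factorization q = 0 := by
    intro q hq3
    by_contra! hne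
    have : q = 1 := Nat.eq_one_of_dvd_coprimes h
      (Nat.dvd_of_factorization_pos hne.1) (Nat.dvd_of_factorization_pos hne.2)
    omega
  simp only [Nat.eq_sq_add_sq_iff_forall_even_factorization, ← forall_and,
    Nat.factorization_mul_apply_of_coprime h]
  refine forall_congr' fun q ↦ ⟨fun H hq3 ↦ ?_, fun H hq3 ↦ ?_⟩
  all_goals rcases disjoint q hq3 with h0 | h0 <;> simp_all

theorem Nat.Prime.eq_sq_add_sq_pow_iff {p : ℕ} (hp : p.Prime) (e : ℕ) :
    (∃ x y, p ^ e = x ^ 2 + y ^ 2) ↔ (p % 4 = 3 → Even e) := by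
  rw [Nat.eq_sq_add_sq_iff_forall_even_factorization, hp.factorization_pow]
  refine ⟨fun h hp3 ↦ by simpa using h p hp3, fun h q hq3 ↦ ?_⟩
  rcases eq_or_ne p q with rfl | hne
  · simpa using h hq3
  · simp [hne]

theorem Nat.Prime.eq_two_or_mod_four_eq_one_or_three {p : ℕ} (hp : p.Prime) :
    p = 2 ∨ p % 4 = 1 ∨ p % 4 = 3 := by
  rcases hp.eq_two_or_odd with h | h
  · exact .inl h
  · omega

theorem hasSum_ite_even_pow_of_norm_lt_one {K : Type*} [NormedDivisionRing K] [CompleteSpace K]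
    {x : K} (hx : ‖x‖ < 1) : HasSum (fun n ↦ if Even n then x ^ n else 0) (1 - x ^ 2)⁻¹ := by
  have hx2 : ‖x ^ 2‖ < 1 := by rw [norm_pow]; exact pow_lt_one₀ (norm_nonneg x) hx two_ne_zero
  rw [← (mul_right_injective₀ (two_ne_zero (α := ℕ))).hasSum_iff]
  · simpa [Function.comp_def, pow_mul] using hasSum_geometric_of_norm_lt_one hx2
  · intro n hn
    simp only [Set.mem_range, not_exists] at hn
    rw [if_neg]
    rintro ⟨k, rfl⟩
    exact hn k (two_mul k)

theorem Complex.multipliable_one_sub_inv_of_summable {ι : Type*} {x : ι → ℂ} (hx : Summable x)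
    (hx1 : ∀ i, x i ≠ 1) : Multipliable fun i ↦ (1 - x i)⁻¹ := by
  have := hx.clog_one_sub.neg.hasSum.cexp
  simp only [Function.comp_def, exp_neg, exp_log (sub_ne_zero.mpr (hx1 _).symm)] at this
  exact this.multipliable

theorem Nat.Primes.norm_cpow_neg_lt_one (p : Nat.Primes) {w : ℂ} (hw : 0 < w.re) :
    ‖((p : ℕ) : ℂ) ^ (-w)‖ < 1 := by
  rw [norm_natCast_cpow_of_pos p.prop.pos, neg_re]
  exact Real.rpow_lt_one_of_one_lt_of_neg (mod_cast p.prop.one_lt) (neg_neg_of_pos hw)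

theorem Nat.Primes.multipliable_subtype_one_sub_cpow_neg_inv {w : ℂ} (hw : 1 < w.re)
    (P : Nat.Primes → Prop) :
    Multipliable fun q : {p : Nat.Primes // P p} ↦ (1 - ((q.1 : ℕ) : ℂ) ^ (-w))⁻¹ := by
  refine multipliable_one_sub_inv_of_summable ?_ fun q h ↦ ?_
  · exact (summable_riemannZetaSummand hw).of_norm.comp_injective
      (Subtype.val_injective.comp Subtype.val_injective)
  · simpa [h] using q.1.norm_cpow_neg_lt_one (w := w) (by linarith)

theorem Nat.Primes.hasProd_ite_mod_four_eq_three {M : Type*} [CommMonoid M] [TopologicalSpace M]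
    [ContinuousMul M] {f g : ℕ → M} {a b : M}
    (ha : HasProd (fun q : {p : Nat.Primes // (p : ℕ) % 4 = 1} ↦ f q.1) a)
    (hb : HasProd (fun r : {p : Nat.Primes // (p : ℕ) % 4 = 3} ↦ g r.1) b) :
    HasProd (fun p : Nat.Primes ↦ if (p : ℕ) % 4 = 3 then g p else f p) (f 2 * a * b) := by
  have h2 : HasProd ({p : Nat.Primes | (p : ℕ) = 2}.mulIndicator fun p ↦ f p) (f 2) := by
    have hsingle := hasProd_single (f := {p : Nat.Primes | (p : ℕ) = 2}.mulIndicator fun p ↦ f p)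
      ⟨2, Nat.prime_two⟩ fun q hq ↦
        Set.mulIndicator_of_notMem (a := q) (fun h : (q : ℕ) = 2 ↦ hq (Subtype.ext h)) _
    exact Set.mulIndicator_of_mem (s := {p : Nat.Primes | (p : ℕ) = 2}) (a := ⟨2, Nat.prime_two⟩)
      rfl (fun p ↦ f p) ▸ hsingle
  have h1 : HasProd ({p : Nat.Primes | (p : ℕ) % 4 = 1}.mulIndicator fun p ↦ f p) a :=
    hasProd_subtype_iff_mulIndicator.mp ha
  have h3 : HasProd ({p : Nat.Primes | (p : ℕ) % 4 = 3}.mulIndicator fun p ↦ g p) b :=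
    hasProd_subtype_iff_mulIndicator.mp hb
  refine ((h2.mul h1).mul h3).congr_fun fun p ↦ ?_
  rcases p.prop.eq_two_or_mod_four_eq_one_or_three with h | h | h
  · simp [h]
  all_goals simp [h, show (p : ℕ) ≠ 2 by omega]

theorem eulerProduct_hasProd_of_norm_le_one {b : ℕ → ℂ} (hb₁ : b 1 = 1)
    (hmul : ∀ {m n : ℕ}, m.Coprime n → b (m * n) = b m * b n) (hb : ∀ n, ‖b n‖ ≤ 1)
    {s : ℂ} (hs : 1 < s.re) :
    HasProd (fun p : Nat.Primes ↦ ∑' e : ℕ, b ((p : ℕ) ^ e) * (((p : ℕ) : ℂ) ^ (-s)) ^ e)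
      (∑' n : ℕ, b (n + 1) / ((n : ℂ) + 1) ^ s) := by
  set Z := riemannZetaSummandHom (ne_zero_of_one_lt_re hs)
  have hZ (n : ℕ) : Z n = (n : ℂ) ^ (-s) := rfl
  have hsum : Summable fun n ↦ ‖b n * Z n‖ :=
    (summable_riemannZetaSummand hs).of_nonneg_of_le (fun _ ↦ norm_nonneg _) fun n ↦ by
      rw [norm_mul]; exact mul_le_of_le_one_left (norm_nonneg _) (hb n)
  have hseries : ∑' n, b n * Z n = ∑' n : ℕ, b (n + 1) / ((n : ℂ) + 1) ^ s := by
    rw [hsum.of_norm.tsum_eq_zero_add]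
    simp [hZ, cpow_neg, div_eq_mul_inv, ne_zero_of_one_lt_re hs]
  have := EulerProduct.eulerProduct_hasProd (f := fun n ↦ b n * Z n) (by simp [hb₁])
    (fun h ↦ by simp only [hmul h, map_mul]; ring) hsum (by simp)
  simp only [hseries, map_pow] at this
  simpa only [hZ] using this

lemma sumTwoSquaresInd_one : sumTwoSquaresInd 1 = 1 := if_pos ⟨1, 0, rfl⟩

lemma sumTwoSquaresInd_mul {m n : ℕ} (h : m.Coprime n) :
    sumTwoSquaresInd (m * n) = sumTwoSquaresInd m * sumTwoSquaresInd n := by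
  simp only [sumTwoSquaresInd, h.eq_sq_add_sq_mul_iff, ite_zero_mul_ite_zero, mul_one]

lemma sumTwoSquaresInd_prime_pow {p : ℕ} (hp : p.Prime) (e : ℕ) :
    sumTwoSquaresInd (p ^ e) = if p % 4 = 3 → Even e then 1 else 0 := by
  simp only [sumTwoSquaresInd, hp.eq_sq_add_sq_pow_iff]

lemma norm_sumTwoSquaresInd_le_one (n : ℕ) : ‖sumTwoSquaresInd n‖ ≤ 1 := by
  unfold sumTwoSquaresInd; split_ifs <;> simp

lemma tsum_sumTwoSquaresInd_prime_pow_mul_pow {p : ℕ} (hp : p.Prime) {x : ℂ} (hx : ‖x‖ < 1) :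
    ∑' e, sumTwoSquaresInd (p ^ e) * x ^ e = if p % 4 = 3 then (1 - x ^ 2)⁻¹ else (1 - x)⁻¹ := by
  split_ifs with h3
  · simpa [sumTwoSquaresInd_prime_pow hp, h3] using
      (hasSum_ite_even_pow_of_norm_lt_one hx).tsum_eq
  · simp [sumTwoSquaresInd_prime_pow hp, h3, tsum_geometric_of_norm_lt_one hx]

theorem sumTwoSquaresInd_eulerProduct_hasProd {s : ℂ} (hs : 1 < s.re) :
    HasProd (fun p : Nat.Primes ↦ if (p : ℕ) % 4 = 3 then (1 - ((p : ℕ) : ℂ) ^ (-(2 * s)))⁻¹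
        else (1 - ((p : ℕ) : ℂ) ^ (-s))⁻¹)
      (∑' n : ℕ, sumTwoSquaresInd (n + 1) / ((n : ℂ) + 1) ^ s) := by
  convert eulerProduct_hasProd_of_norm_le_one sumTwoSquaresInd_one
    sumTwoSquaresInd_mul norm_sumTwoSquaresInd_le_one hs using 2 with p
  rw [tsum_sumTwoSquaresInd_prime_pow_mul_pow p.prop (p.norm_cpow_neg_lt_one (by linarith)),
    ← cpow_nat_mul]
  push_cast
  ring_nf

/-- For `Re(s) > 1`, the Dirichlet series `F(s) = Σ b(n) n^{-s}` of the
sum-of-two-squares indicator has the Euler product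
`F(s) = (1-2^{-s})^{-1} ∏_{q ≡ 1 (4)} (1-q^{-s})^{-1} ∏_{r ≡ 3 (4)} (1-r^{-2s})^{-1}`. -/
theorem sumTwoSquares_euler_product (s : ℂ) (hs : 1 < s.re) :
    (∑' n : ℕ, sumTwoSquaresInd (n + 1) / (((n : ℕ) + 1 : ℂ)) ^ s)
        = (1 - (2 : ℂ) ^ (-s))⁻¹
          * (∏' q : {p : Nat.Primes // (p : ℕ) % 4 = 1}, (1 - ((q.1 : ℕ) : ℂ) ^ (-s))⁻¹)
          * (∏' r : {p : Nat.Primes // (p : ℕ) % 4 = 3}, (1 - ((r.1 : ℕ) : ℂ) ^ (-(2 * s)))⁻¹)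
      ∧ Multipliable
          (fun q : {p : Nat.Primes // (p : ℕ) % 4 = 1} => (1 - ((q.1 : ℕ) : ℂ) ^ (-s))⁻¹)
      ∧ Multipliable
          (fun r : {p : Nat.Primes // (p : ℕ) % 4 = 3} => (1 - ((r.1 : ℕ) : ℂ) ^ (-(2 * s)))⁻¹) := by
  have h2s : 1 < (2 * s).re := by simp; linarith
  have h1 := Nat.Primes.multipliable_subtype_one_sub_cpow_neg_inv hs fun p ↦ (p : ℕ) % 4 = 1
  have h3 := Nat.Primes.multipliable_subtype_one_sub_cpow_neg_inv h2s fun p ↦ (p : ℕ) % 4 = 3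
  refine ⟨(sumTwoSquaresInd_eulerProduct_hasProd hs).unique ?_, h1, h3⟩
  have := Nat.Primes.hasProd_ite_mod_four_eq_three
    (f := fun n : ℕ ↦ (1 - (n : ℂ) ^ (-s))⁻¹) (g := fun n : ℕ ↦ (1 - (n : ℂ) ^ (-(2 * s)))⁻¹)
    h1.hasProd h3.hasProd
  simpa using this
end
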